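/- arXiv:2002.12678 — 3 statements merged into one kernel-verified Lean document; each statement's English description precedes it below -/
import Mathlib

section
/- Let F : ℝ → ℝ be locally Lipschitz with F(0) = 0. Suppose liminf_{s→0⁺} max{ξ : ξ ∈ ∂F(s)}/s < 0 and limsup_{s→0⁺} F(s)/s² = +∞, where ∂F denotes the Clarke generalized gradient. Then 0 ∈ ∂F(0). -/
/-
Write `F°(x; v)` for `clarkeDeriv F x v`. For locally Lipschitz `F` it is positively homogeneous
in `v`, satisfies `-F°(x; v) ≤ F°(x; -v)` and is upper semicontinuous in `x`, so `0 ∈ ∂F(0)` as soon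
as `F°(0; 1) ≥ 0` and `F°(0; -1) ≥ 0`, and `max ∂F(x) = F°(x; 1)`.

If `F°(0; 1) < 0`, then `F s < F 0 = 0` for all small `s > 0`, against `limsup F(s)/s² = ∞`.
If `F°(0; -1) < 0`, then by upper semicontinuity `F°(s; -1) < 0` near `0`, hence
`max ∂F(s) = F°(s; 1) ≥ -F°(s; -1) > 0`, against `liminf max ∂F(s)/s < 0`.
-/

open Filter Topology

/-- Clarke's generalized directional derivative of `f : ℝ → ℝ` at `x` in direction `v`. -/
noncomputable def clarkeDeriv (f : ℝ → ℝ) (x v : ℝ) : ℝ :=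
  Filter.limsup (fun p : ℝ × ℝ => (f (p.1 + p.2 * v) - f p.1) / p.2)
    ((𝓝 x) ×ˢ (𝓝[>] (0 : ℝ)))

/-- Clarke's generalized gradient of `f : ℝ → ℝ` at `x`. -/
noncomputable def clarkeGrad (f : ℝ → ℝ) (x : ℝ) : Set ℝ :=
  {ξ : ℝ | ∀ v : ℝ, ξ * v ≤ clarkeDeriv f x v}

noncomputable def clarkeQuotient (f : ℝ → ℝ) (v : ℝ) (p : ℝ × ℝ) : ℝ :=
  (f (p.1 + p.2 * v) - f p.1) / p.2

lemma clarkeDeriv_eq_limsup (f : ℝ → ℝ) (x v : ℝ) :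
    clarkeDeriv f x v = limsup (clarkeQuotient f v) (𝓝 x ×ˢ 𝓝[>] 0) := rfl

lemma tendsto_fst_add_snd_mul (x v : ℝ) :
    Tendsto (fun p : ℝ × ℝ => p.1 + p.2 * v) (𝓝 x ×ˢ 𝓝[>] 0) (𝓝 x) := by
  have hsnd : Tendsto (fun p : ℝ × ℝ => p.2) (𝓝 x ×ˢ 𝓝[>] 0) (𝓝 0) :=
    tendsto_snd.mono_right nhdsWithin_le_nhds
  simpa using tendsto_fst.add (hsnd.mul_const v)

lemma map_prodMap_const_mul_nhds_prod_nhdsGT {t : ℝ} (ht : 0 < t) (x : ℝ) :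
    map (Prod.map id (t * ·)) (𝓝 x ×ˢ 𝓝[>] 0) = 𝓝 x ×ˢ 𝓝[>] 0 := by
  have hsurj : Function.Surjective (t * · : ℝ → ℝ) := fun s => ⟨s / t, by field_simp⟩
  rw [← prod_map_map_eq', map_id]
  conv_lhs => rw [← comap_mulLeft_nhdsGT_zero ht, map_comap_of_surjective hsurj]

section LocallyLipschitz

variable {f : ℝ → ℝ}

lemma LocallyLipschitz.isBoundedUnder_abs_clarkeQuotient (hf : LocallyLipschitz f) (x v : ℝ) :
    IsBoundedUnder (· ≤ ·) (𝓝 x ×ˢ 𝓝[>] 0) fun p => |clarkeQuotient f v p| := by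
  obtain ⟨K, t, ht, hK⟩ := hf x
  refine ⟨K * |v|, eventually_map.2 ?_⟩
  filter_upwards [tendsto_fst ht, tendsto_fst_add_snd_mul x v ht,
    tendsto_snd self_mem_nhdsWithin] with p hp hpv (hτ : 0 < p.2)
  have hd := hK.dist_le_mul _ hpv _ hp
  rw [Real.dist_eq, Real.dist_eq, add_sub_cancel_left, abs_mul, abs_of_pos hτ] at hd
  rw [clarkeQuotient, abs_div, abs_of_pos hτ, div_le_iff₀ hτ]
  linarith

lemma LocallyLipschitz.isBoundedUnder_le_clarkeQuotient (hf : LocallyLipschitz f) (x v : ℝ) :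
    IsBoundedUnder (· ≤ ·) (𝓝 x ×ˢ 𝓝[>] 0) (clarkeQuotient f v) :=
  (isBoundedUnder_le_abs.1 (hf.isBoundedUnder_abs_clarkeQuotient x v)).1

lemma LocallyLipschitz.isBoundedUnder_ge_clarkeQuotient (hf : LocallyLipschitz f) (x v : ℝ) :
    IsBoundedUnder (· ≥ ·) (𝓝 x ×ˢ 𝓝[>] 0) (clarkeQuotient f v) :=
  (isBoundedUnder_le_abs.1 (hf.isBoundedUnder_abs_clarkeQuotient x v)).2

lemma clarkeDeriv_zero_right (x : ℝ) : clarkeDeriv f x 0 = 0 := by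
  have hquot : clarkeQuotient f 0 = fun _ => 0 := by ext; simp [clarkeQuotient]
  rw [clarkeDeriv_eq_limsup, hquot, limsup_const]

lemma LocallyLipschitz.clarkeDeriv_mul_of_pos (hf : LocallyLipschitz f) (x v : ℝ) {t : ℝ}
    (ht : 0 < t) : clarkeDeriv f x (t * v) = t * clarkeDeriv f x v := by
  set ψ : ℝ × ℝ → ℝ × ℝ := Prod.map id (t * ·)
  have hquot : clarkeQuotient f (t * v) = fun p => t * clarkeQuotient f v (ψ p) := by
    ext ⟨z, τ⟩
    rcases eq_or_ne τ 0 with rfl | hτ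
    · simp [clarkeQuotient, ψ]
    · simp only [clarkeQuotient, ψ, Prod.map_fst, Prod.map_snd, id_eq]
      rw [mul_assoc]
      field_simp
  have hmap := map_prodMap_const_mul_nhds_prod_nhdsGT ht x
  have hbdd : IsBoundedUnder (· ≤ ·) (𝓝 x ×ˢ 𝓝[>] 0) (clarkeQuotient f v ∘ ψ) := by
    rw [IsBoundedUnder, ← map_map, hmap]; exact hf.isBoundedUnder_le_clarkeQuotient x v
  have hcobdd : IsCoboundedUnder (· ≤ ·) (𝓝 x ×ˢ 𝓝[>] 0) (clarkeQuotient f v ∘ ψ) := by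
    rw [IsCoboundedUnder, ← map_map, hmap]
    exact (hf.isBoundedUnder_ge_clarkeQuotient x v).isCoboundedUnder_le
  rw [clarkeDeriv_eq_limsup, clarkeDeriv_eq_limsup, hquot]
  calc limsup (fun p => t * clarkeQuotient f v (ψ p)) (𝓝 x ×ˢ 𝓝[>] 0)
      = t * limsup (clarkeQuotient f v ∘ ψ) (𝓝 x ×ˢ 𝓝[>] 0) :=
        ((monotone_mul_left_of_nonneg ht.le).map_limsup_of_continuousAt _
          (continuous_const_mul t).continuousAt hbdd hcobdd).symm
    _ = t * limsup (clarkeQuotient f v) (𝓝 x ×ˢ 𝓝[>] 0) := by rw [limsup_comp, hmap]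

lemma LocallyLipschitz.neg_clarkeDeriv_le (hf : LocallyLipschitz f) (x v : ℝ) :
    -clarkeDeriv f x v ≤ clarkeDeriv f x (-v) := by
  set l : Filter (ℝ × ℝ) := 𝓝 x ×ˢ 𝓝[>] 0
  set φ : ℝ × ℝ → ℝ × ℝ := fun p => (p.1 + p.2 * v, p.2)
  have hφ : Tendsto φ l l := (tendsto_fst_add_snd_mul x v).prodMk tendsto_snd
  have hquot : clarkeQuotient f (-v) ∘ φ = fun p => -clarkeQuotient f v p := by
    ext p
    simp only [Function.comp_apply, clarkeQuotient, φ, mul_neg, add_neg_cancel_right]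
    rw [← neg_div, neg_sub]
  have hle := hf.isBoundedUnder_le_clarkeQuotient x v
  have hge := hf.isBoundedUnder_ge_clarkeQuotient x v
  calc -clarkeDeriv f x v = liminf (fun p => -clarkeQuotient f v p) l :=
        Antitone.map_limsup_of_continuousAt (fun _ _ h => neg_le_neg h) _
          continuous_neg.continuousAt hle hge.isCoboundedUnder_le
    _ ≤ limsup (fun p => -clarkeQuotient f v p) l :=
        liminf_le_limsup (isBoundedUnder_le_neg.2 hge) (isBoundedUnder_ge_neg.2 hle)
    _ = limsup (clarkeQuotient f (-v)) (map φ l) := by rw [← hquot, limsup_comp]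
    _ ≤ clarkeDeriv f x (-v) :=
        limsup_le_limsup_of_le hφ
          ((hf.isBoundedUnder_ge_clarkeQuotient x (-v)).mono hφ).isCoboundedUnder_le
          (hf.isBoundedUnder_le_clarkeQuotient x (-v))

lemma LocallyLipschitz.isGreatest_clarkeGrad (hf : LocallyLipschitz f) (x : ℝ) :
    IsGreatest (clarkeGrad f x) (clarkeDeriv f x 1) := by
  refine ⟨fun u => ?_, fun ξ hξ => by simpa using hξ 1⟩
  rcases lt_trichotomy u 0 with hu | rfl | hu
  · have hneg := hf.neg_clarkeDeriv_le x (-u)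
    rw [neg_neg, ← mul_one (-u), hf.clarkeDeriv_mul_of_pos x 1 (neg_pos.2 hu)] at hneg
    linarith
  · rw [mul_zero, clarkeDeriv_zero_right]
  · rw [mul_comm, ← hf.clarkeDeriv_mul_of_pos x 1 hu, mul_one]

lemma LocallyLipschitz.upperSemicontinuous_clarkeDeriv (hf : LocallyLipschitz f) (v : ℝ) :
    UpperSemicontinuous fun x => clarkeDeriv f x v := by
  intro x y hy
  obtain ⟨b, hxb, hby⟩ := exists_between hy
  obtain ⟨U, hU, T, hT, hUT⟩ := eventually_prod_iff.1
    (eventually_lt_of_limsup_lt hxb (hf.isBoundedUnder_le_clarkeQuotient x v))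
  filter_upwards [eventually_eventually_nhds.2 hU] with z hz
  refine lt_of_le_of_lt (limsup_le_of_le ?_ ?_) hby
  · exact (hf.isBoundedUnder_ge_clarkeQuotient z v).isCoboundedUnder_le
  · have hzb : ∀ᶠ p in 𝓝 z ×ˢ 𝓝[>] 0, clarkeQuotient f v p < b :=
      eventually_prod_iff.2 ⟨U, hz, T, hT, hUT⟩
    exact hzb.mono fun _ h => h.le

lemma LocallyLipschitz.clarkeDeriv_nonneg_of_frequently_le (hf : LocallyLipschitz f) {x v : ℝ}
    (h : ∃ᶠ t in 𝓝[>] 0, f x ≤ f (x + t * v)) : 0 ≤ clarkeDeriv f x v := by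
  by_contra! hneg
  have hslope := (tendsto_const_nhds.prodMk tendsto_id).eventually
    (eventually_lt_of_limsup_lt hneg (hf.isBoundedUnder_le_clarkeQuotient x v))
  obtain ⟨t, hle, hlt, ht⟩ := (h.and_eventually (hslope.and self_mem_nhdsWithin)).exists
  have hlt : (f (x + t * v) - f x) / t < 0 := hlt
  linarith [neg_of_div_neg_left hlt (le_of_lt ht)]

lemma LocallyLipschitz.clarkeDeriv_neg_nonneg_of_frequently_nonpos (hf : LocallyLipschitz f)
    {x v : ℝ} (h : ∃ᶠ y in 𝓝 x, clarkeDeriv f y v ≤ 0) : 0 ≤ clarkeDeriv f x (-v) := by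
  by_contra! hneg
  obtain ⟨y, hy, hy'⟩ :=
    (h.and_eventually (hf.upperSemicontinuous_clarkeDeriv (-v) x 0 hneg)).exists
  linarith [hf.neg_clarkeDeriv_le y v]

lemma LocallyLipschitz.zero_mem_clarkeGrad (hf : LocallyLipschitz f) {x : ℝ}
    (hpos : 0 ≤ clarkeDeriv f x 1) (hneg : 0 ≤ clarkeDeriv f x (-1)) : 0 ∈ clarkeGrad f x := by
  intro v
  rw [zero_mul]
  rcases lt_trichotomy v 0 with hv | rfl | hv
  · rw [show v = -v * -1 by ring, hf.clarkeDeriv_mul_of_pos x (-1) (neg_pos.2 hv)]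
    exact mul_nonneg (neg_nonneg.2 hv.le) hneg
  · rw [clarkeDeriv_zero_right]
  · rw [← mul_one v, hf.clarkeDeriv_mul_of_pos x 1 hv]
    exact mul_nonneg hv.le hpos

end LocallyLipschitz

lemma Real.frequently_neg_of_liminf_neg {α : Type*} {l : Filter α} {u : α → ℝ}
    (h : liminf u l < 0) : ∃ᶠ a in l, u a < 0 := by
  contrapose! h
  rw [liminf_eq]
  exact Real.sSup_nonneg' ⟨0, h, le_rfl⟩

theorem stmt0 (F : ℝ → ℝ) (hF : LocallyLipschitz F) (hF0 : F 0 = 0)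
    (hlow : Filter.liminf (fun s => sSup (clarkeGrad F s) / s) (𝓝[>] (0 : ℝ)) < 0)
    (hup : Filter.limsup (fun s => ((F s / s ^ 2 : ℝ) : EReal)) (𝓝[>] (0 : ℝ)) = ⊤) :
    (0 : ℝ) ∈ clarkeGrad F 0 := by
  have hFpos : ∃ᶠ s in 𝓝[>] (0 : ℝ), 0 < F s := by
    refine (frequently_lt_of_lt_limsup (b := 0) (by isBoundedDefault)
      (hup ▸ EReal.zero_lt_top)).mono fun s hs => ?_
    by_contra! hFs
    exact (EReal.coe_pos.1 hs).not_ge (div_nonpos_of_nonpos_of_nonneg hFs (sq_nonneg s))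
  have hslope : ∃ᶠ s in 𝓝 (0 : ℝ), clarkeDeriv F s 1 ≤ 0 := by
    refine ((Real.frequently_neg_of_liminf_neg hlow).and_eventually self_mem_nhdsWithin
      |>.filter_mono nhdsWithin_le_nhds).mono fun s ⟨hs, (hs0 : 0 < s)⟩ => ?_
    rw [(hF.isGreatest_clarkeGrad s).csSup_eq] at hs
    exact (neg_of_div_neg_left hs hs0.le).le
  refine hF.zero_mem_clarkeGrad ?_ (hF.clarkeDeriv_neg_nonneg_of_frequently_nonpos hslope)
  exact hF.clarkeDeriv_nonneg_of_frequently_le (hFpos.mono fun s hs => by simpa [hF0] using hs.le)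
end

section
/- Let A : ℝ → ℝ be locally Lipschitz with A = 0 on (−∞, 0], and suppose there exist l∞ > 0 and ζ > 0 with A(s) ≥ −l∞ for all s > ζ. Let Ω ⊂ ℝⁿ be bounded open with B(x₀,r) ⊂ Ω, k > 0, and L∞ > 0 satisfy ½C(r,n) + (k/2 + l∞)m(Ω) < L∞ (r/2)ⁿ ω_n. If (s̃_i) ⊂ (0,∞) with s̃_i → ∞ and A(s̃_i) > L∞ s̃_i² for all i, then T(w_{s̃_i}) → −∞ as i → ∞, where T(u) = ½‖u‖²_{H₀¹} + (k/2)∫_Ω u² − ∫_Ω A(u) and w_s is the standard truncation function with plateau value s. -/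
/-!
On `B(x₀, r/2)` the function `w_s` equals `s`, so the potential term removes at least
`A(s) (r/2)ⁿ ωₙ > L∞ s² (r/2)ⁿ ωₙ`, while on the rest of `Ω` the values `A(w_s)` are bounded
below uniformly in `s` (by compactness on `[0, ζ]`, by `-l∞` beyond). The gradient of `w_s` has
norm at most `2s/r` and lives on the annulus `B(x₀, r) \ B(x₀, r/2)`, whence
`∫ |∇w_s|² ≤ C s²`; also `∫ w_s² ≤ s² m(Ω)`. So `T(w_s) ≤ α s² + β` with
`α = C/2 + k m(Ω)/2 - L∞ (r/2)ⁿ ωₙ < 0`.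
-/

open Filter Topology MeasureTheory Metric

section Plateau

variable {X : Type*} [PseudoMetricSpace X] {s r : ℝ} {x₀ x : X}

/-- The paper's `w_s` (see `plateau_eq_ite`), in a form whose Lipschitz constant `2|s|/r` is
evident. -/
noncomputable def plateau (s : ℝ) (x₀ : X) (r : ℝ) (x : X) : ℝ :=
  2 * s / r * min (max (r - dist x x₀) 0) (r / 2)

theorem plateau_eq_ite (hr : 0 < r) :
    plateau s x₀ r x = if dist x x₀ ≤ r / 2 then s
      else if dist x x₀ < r then 2 * s / r * (r - dist x x₀) else 0 := by
  unfold plateau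
  split_ifs with h₁ h₂
  · rw [max_eq_left (by linarith), min_eq_right (by linarith)]
    field_simp
  · rw [max_eq_left (by linarith), min_eq_left (by linarith)]
  · rw [max_eq_right (by linarith), min_eq_left (by linarith), mul_zero]

theorem plateau_of_dist_le (hr : 0 < r) (hx : dist x x₀ ≤ r / 2) : plateau s x₀ r x = s := by
  rw [plateau_eq_ite hr, if_pos hx]

theorem plateau_of_le_dist (hr : 0 < r) (hx : r ≤ dist x x₀) : plateau s x₀ r x = 0 := by
  rw [plateau_eq_ite hr, if_neg (by linarith), if_neg (by linarith)]

theorem plateau_mem_Icc (hr : 0 < r) (hs : 0 ≤ s) : plateau s x₀ r x ∈ Set.Icc 0 s := by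
  have h₀ : 0 ≤ min (max (r - dist x x₀) 0) (r / 2) := le_min (le_max_right _ _) (by linarith)
  have h₁ : min (max (r - dist x x₀) 0) (r / 2) ≤ r / 2 := min_le_right _ _
  refine ⟨by unfold plateau; positivity, ?_⟩
  calc plateau s x₀ r x ≤ 2 * s / r * (r / 2) := by unfold plateau; gcongr
    _ = s := by field_simp

theorem lipschitzWith_plateau (s : ℝ) (x₀ : X) (r : ℝ) :
    LipschitzWith ‖2 * s / r‖₊ (plateau s x₀ r) := by
  have h : LipschitzWith 1 fun x => min (max (r - dist x x₀) 0) (r / 2) := by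
    simpa using (((LipschitzWith.const r).sub (LipschitzWith.dist_left x₀)).max_const 0).min_const
      (r / 2)
  have h' := (lipschitzWith_smul (2 * s / r)).comp h
  rw [mul_one] at h'
  exact h'

end Plateau

section Measure

variable {X : Type*} [MeasurableSpace X] {μ : Measure X}

theorem integral_norm_fderiv_sq_le_of_lipschitzWith {E : Type*} [NormedAddCommGroup E]
    [NormedSpace ℝ E] [MeasurableSpace E] {μ : Measure E} {f : E → ℝ} {K : NNReal} {D : Set E}
    (hf : LipschitzWith K f) (hD : MeasurableSet D) (hDμ : μ D ≠ ⊤)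
    (hf₀ : ∀ x ∉ D, fderiv ℝ f x = 0) :
    ∫ x, ‖fderiv ℝ f x‖ ^ 2 ∂μ ≤ K ^ 2 * μ.real D := by
  have hle : ∀ x, ‖fderiv ℝ f x‖ ^ 2 ≤ D.indicator (fun _ => (K : ℝ) ^ 2) x := by
    intro x
    by_cases hx : x ∈ D
    · rw [Set.indicator_of_mem hx]
      exact pow_le_pow_left₀ (norm_nonneg _) (norm_fderiv_le_of_lipschitz ℝ hf) 2
    · simp [Set.indicator_of_notMem hx, hf₀ x hx]
  calc ∫ x, ‖fderiv ℝ f x‖ ^ 2 ∂μ ≤ ∫ x, D.indicator (fun _ => (K : ℝ) ^ 2) x ∂μ :=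
        integral_mono_of_nonneg (ae_of_all _ fun x => by positivity)
          ((integrable_indicator_iff hD).2 (integrableOn_const hDμ)) (ae_of_all _ hle)
    _ = K ^ 2 * μ.real D := by rw [integral_indicator_const _ hD, smul_eq_mul, mul_comm]

theorem mul_measureReal_add_mul_le_setIntegral {g : X → ℝ} {S Ω : Set X} {a b : ℝ}
    (hS : MeasurableSet S) (hΩ : MeasurableSet Ω) (hSΩ : S ⊆ Ω) (hΩμ : μ Ω ≠ ⊤)
    (hg : IntegrableOn g Ω μ) (hgS : ∀ x ∈ S, g x = a) (hgΩ : ∀ x ∈ Ω, b ≤ g x) (hb : b ≤ 0) :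
    a * μ.real S + b * μ.real Ω ≤ ∫ x in Ω, g x ∂μ := by
  have hS_eq : ∫ x in S, g x ∂μ = a * μ.real S := by
    rw [setIntegral_congr_fun hS hgS, setIntegral_const, smul_eq_mul, mul_comm]
  have hΩS : b * μ.real (Ω \ S) ≤ ∫ x in Ω \ S, g x ∂μ := by
    rw [mul_comm]
    exact setIntegral_ge_of_const_le (hΩ.diff hS) (measure_ne_top_of_subset Set.sdiff_subset hΩμ)
      (fun x hx => hgΩ x hx.1) (hg.mono_set Set.sdiff_subset)
  have hb_mono : b * μ.real Ω ≤ b * μ.real (Ω \ S) :=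
    mul_le_mul_of_nonpos_left (measureReal_mono Set.sdiff_subset hΩμ) hb
  rw [← integral_inter_add_sdiff hS hg, Set.inter_eq_right.2 hSΩ, hS_eq]
  linarith

theorem setIntegral_plateau_sq_le [PseudoMetricSpace X] {s r : ℝ} {x₀ : X} {Ω : Set X}
    (hr : 0 < r) (hs : 0 ≤ s) (hΩμ : μ Ω ≠ ⊤) :
    ∫ x in Ω, plateau s x₀ r x ^ 2 ∂μ ≤ s ^ 2 * μ.real Ω := by
  refine (Real.le_norm_self _).trans
    (norm_setIntegral_le_of_norm_le_const hΩμ.lt_top fun x _ => ?_)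
  obtain ⟨h₀, h₁⟩ := plateau_mem_Icc (x₀ := x₀) (x := x) hr hs
  rw [Real.norm_of_nonneg (sq_nonneg _)]
  exact pow_le_pow_left₀ h₀ h₁ 2

end Measure

section Euclidean

variable {E : Type*} [NormedAddCommGroup E] [NormedSpace ℝ E] {s r : ℝ} {x₀ : E}

theorem fderiv_plateau_eq_zero (hr : 0 < r) {x : E} (hx : x ∉ closedBall x₀ r \ ball x₀ (r / 2)) :
    fderiv ℝ (plateau s x₀ r) x = 0 := by
  rw [Set.mem_sdiff, not_and_or, not_not] at hx
  rcases hx with hout | hin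
  · have hev : plateau s x₀ r =ᶠ[𝓝 x] fun _ => 0 := by
      filter_upwards [isClosed_closedBall.isOpen_compl.mem_nhds hout] with y hy
      exact plateau_of_le_dist hr (le_of_lt (not_le.1 hy))
    rw [hev.fderiv_eq, fderiv_const_apply]
  · have hev : plateau s x₀ r =ᶠ[𝓝 x] fun _ => s := by
      filter_upwards [isOpen_ball.mem_nhds hin] with y hy
      exact plateau_of_dist_le hr (le_of_lt hy)
    rw [hev.fderiv_eq, fderiv_const_apply]

variable [FiniteDimensional ℝ E] [MeasurableSpace E] [BorelSpace E] (μ : Measure E)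
  [μ.IsAddHaarMeasure]

theorem measureReal_ball_eq (x : E) {ρ : ℝ} (hρ : 0 < ρ) :
    μ.real (ball x ρ) = ρ ^ Module.finrank ℝ E * μ.real (ball 0 1) := by
  rw [measureReal_def, measureReal_def, Measure.addHaar_ball_of_pos μ x hρ, ENNReal.toReal_mul,
    ENNReal.toReal_ofReal (by positivity)]

theorem measureReal_closedBall_sdiff_ball (x : E) {ρ r : ℝ} (hρ : 0 < ρ) (hρr : ρ ≤ r) :
    μ.real (closedBall x r \ ball x ρ) =
      (r ^ Module.finrank ℝ E - ρ ^ Module.finrank ℝ E) * μ.real (ball 0 1) := by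
  have hr : 0 ≤ r := hρ.le.trans hρr
  have hsub : ball x ρ ⊆ closedBall x r :=
    ball_subset_closedBall.trans (closedBall_subset_closedBall hρr)
  rw [measureReal_sdiff hsub measurableSet_ball measure_closedBall_lt_top.ne,
    measureReal_ball_eq μ x hρ, measureReal_def, Measure.addHaar_closedBall μ x hr,
    ENNReal.toReal_mul, ENNReal.toReal_ofReal (pow_nonneg hr _), measureReal_def]
  ring

theorem setIntegral_norm_fderiv_plateau_sq_le (Ω : Set E) (hr : 0 < r) :
    ∫ x in Ω, ‖fderiv ℝ (plateau s x₀ r) x‖ ^ 2 ∂μ ≤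
      (2 * s / r) ^ 2 * ((r ^ Module.finrank ℝ E - (r / 2) ^ Module.finrank ℝ E) *
        μ.real (ball 0 1)) := by
  set D := closedBall x₀ r \ ball x₀ (r / 2)
  have hD : MeasurableSet D := measurableSet_closedBall.diff measurableSet_ball
  have hDμ : μ D ≠ ⊤ := measure_ne_top_of_subset Set.sdiff_subset measure_closedBall_lt_top.ne
  calc ∫ x in Ω, ‖fderiv ℝ (plateau s x₀ r) x‖ ^ 2 ∂μ
        ≤ (‖2 * s / r‖₊ : ℝ) ^ 2 * (μ.restrict Ω).real D :=
        integral_norm_fderiv_sq_le_of_lipschitzWith (lipschitzWith_plateau s x₀ r) hD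
          ((Measure.restrict_apply_le Ω D).trans_lt hDμ.lt_top).ne
          fun x hx => fderiv_plateau_eq_zero hr hx
    _ ≤ (2 * s / r) ^ 2 * μ.real D := by
        rw [coe_nnnorm, Real.norm_eq_abs, sq_abs, measureReal_restrict_apply hD]
        exact mul_le_mul_of_nonneg_left (measureReal_mono Set.inter_subset_left hDμ) (sq_nonneg _)
    _ = _ := by rw [measureReal_closedBall_sdiff_ball μ x₀ (by positivity) (by linarith)]

theorem le_setIntegral_comp_plateau {A : ℝ → ℝ} (hA : Continuous A) {b : ℝ} (hb₀ : b ≤ 0)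
    (hb : ∀ t, 0 ≤ t → b ≤ A t) {Ω : Set E} (hΩ : MeasurableSet Ω) (hΩb : Bornology.IsBounded Ω)
    (hball : ball x₀ (r / 2) ⊆ Ω) (hr : 0 < r) (hs : 0 ≤ s) :
    A s * ((r / 2) ^ Module.finrank ℝ E * μ.real (ball 0 1)) + b * μ.real Ω ≤
      ∫ x in Ω, A (plateau s x₀ r x) ∂μ := by
  have hint : IntegrableOn (fun x => A (plateau s x₀ r x)) Ω μ :=
    ((hA.comp (lipschitzWith_plateau s x₀ r).continuous).continuousOn.integrableOn_compact
      hΩb.isCompact_closure).mono_set subset_closure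
  rw [← measureReal_ball_eq μ x₀ (by positivity)]
  exact mul_measureReal_add_mul_le_setIntegral measurableSet_ball hΩ hball hΩb.measure_lt_top.ne
    hint (fun x hx => by rw [plateau_of_dist_le hr (le_of_lt hx)])
    (fun x _ => hb _ (plateau_mem_Icc hr hs).1) hb₀

end Euclidean

theorem exists_nonpos_forall_nonneg_le {A : ℝ → ℝ} (hA : Continuous A) {l ζ : ℝ}
    (hlow : ∀ s > ζ, -l ≤ A s) : ∃ b ≤ 0, ∀ t, 0 ≤ t → b ≤ A t := by
  obtain ⟨m, hm⟩ := (isCompact_Icc (a := 0) (b := ζ)).bddBelow_image hA.continuousOn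
  refine ⟨min (min m (-l)) 0, min_le_right _ _, fun t ht => ?_⟩
  by_cases htζ : t ≤ ζ
  · exact (min_le_left _ _).trans ((min_le_left _ _).trans (hm ⟨t, ⟨ht, htζ⟩, rfl⟩))
  · exact (min_le_left _ _).trans ((min_le_right _ _).trans (hlow t (not_le.1 htζ)))

theorem sq_two_mul_div_mul_sub_half_pow {r : ℝ} (hr : 0 < r) (s ω : ℝ) (n : ℕ) :
    (2 * s / r) ^ 2 * ((r ^ n - (r / 2) ^ n) * ω) =
      4 * r ^ ((n : ℝ) - 2) * (1 - ((2 : ℝ) ^ n)⁻¹) * ω * s ^ 2 := by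
  rw [Real.rpow_sub hr, Real.rpow_natCast, Real.rpow_two, div_pow r]
  field_simp
  ring

theorem stmt14_general (n : ℕ) (Ω : Set (EuclideanSpace ℝ (Fin n))) (hΩo : IsOpen Ω)
    (hΩb : Bornology.IsBounded Ω)
    (x₀ : EuclideanSpace ℝ (Fin n)) (r : ℝ) (hr : 0 < r) (hball : Metric.ball x₀ r ⊆ Ω)
    (k : ℝ) (hk : 0 < k)
    (A : ℝ → ℝ) (hA : LocallyLipschitz A)
    (linf ζ : ℝ) (hlinf : 0 < linf)
    (hAlow : ∀ s > ζ, -linf ≤ A s)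
    (ωn : ℝ) (hωn : ωn = (MeasureTheory.volume
      (Metric.ball (0 : EuclideanSpace ℝ (Fin n)) 1)).toReal)
    (mΩ : ℝ) (hmΩ : mΩ = (MeasureTheory.volume Ω).toReal)
    (C : ℝ) (hC : C = 4 * r ^ ((n : ℝ) - 2) * (1 - ((2 : ℝ) ^ n)⁻¹) * ωn)
    (Linf : ℝ) (hLinf : (1 / 2) * C + (k / 2 + linf) * mΩ < Linf * (r / 2) ^ n * ωn)
    (st : ℕ → ℝ) (hstpos : ∀ i, 0 < st i) (hsttop : Filter.Tendsto st Filter.atTop Filter.atTop)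
    (hAst : ∀ i, Linf * st i ^ 2 < A (st i))
    (w : ℝ → EuclideanSpace ℝ (Fin n) → ℝ)
    (hw : ∀ s x, w s x = if dist x x₀ ≤ r / 2 then s
      else if dist x x₀ < r then (2 * s / r) * (r - dist x x₀) else 0)
    (T : (EuclideanSpace ℝ (Fin n) → ℝ) → ℝ)
    (hT : ∀ u, T u = (1 / 2) * (∫ x in Ω, ‖fderiv ℝ u x‖ ^ 2) +
      (k / 2) * (∫ x in Ω, (u x) ^ 2) - ∫ x in Ω, A (u x)) :
    Filter.Tendsto (fun i => T (w (st i))) Filter.atTop Filter.atBot := by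
  have hw' : ∀ s, w s = plateau s x₀ r := fun s => funext fun x => by rw [hw, plateau_eq_ite hr]
  have hωn' : ωn = volume.real (ball (0 : EuclideanSpace ℝ (Fin n)) 1) := hωn
  have hmΩ' : mΩ = volume.real Ω := hmΩ
  obtain ⟨b, hb₀, hb⟩ := exists_nonpos_forall_nonneg_le hA.continuous hAlow
  have hmΩ₀ : 0 ≤ mΩ := hmΩ' ▸ measureReal_nonneg
  have hωn₀ : 0 ≤ ωn := hωn' ▸ measureReal_nonneg
  have hα : C / 2 + k / 2 * mΩ - Linf * (r / 2) ^ n * ωn < 0 := by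
    linarith [mul_nonneg hlinf.le hmΩ₀]
  have hT_le : ∀ i, T (w (st i)) ≤
      (C / 2 + k / 2 * mΩ - Linf * (r / 2) ^ n * ωn) * st i ^ 2 - b * mΩ := by
    intro i
    have hs := (hstpos i).le
    have hgrad := setIntegral_norm_fderiv_plateau_sq_le volume Ω (s := st i) (x₀ := x₀) hr
    have hL2 := setIntegral_plateau_sq_le (μ := volume) (x₀ := x₀) hr hs hΩb.measure_lt_top.ne
    have hpot := le_setIntegral_comp_plateau volume hA.continuous hb₀ hb hΩo.measurableSet hΩb
      ((ball_subset_ball (by linarith)).trans hball) hr hs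
    rw [finrank_euclideanSpace_fin, sq_two_mul_div_mul_sub_half_pow hr, ← hωn', ← hC] at hgrad
    rw [finrank_euclideanSpace_fin, ← hωn', ← hmΩ'] at hpot
    rw [← hmΩ'] at hL2
    have hkL2 := mul_le_mul_of_nonneg_left hL2 (by positivity : 0 ≤ k / 2)
    have hAs := mul_le_mul_of_nonneg_right (hAst i).le
      (by positivity : 0 ≤ (r / 2) ^ n * ωn)
    rw [hT, hw']
    linarith
  exact tendsto_atBot_mono hT_le (tendsto_atBot_add_const_right _ _
    (((tendsto_pow_atTop two_ne_zero).comp hsttop).const_mul_atTop_of_neg hα))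

theorem stmt14 (n : ℕ) (Ω : Set (EuclideanSpace ℝ (Fin n))) (hΩo : IsOpen Ω)
    (hΩb : Bornology.IsBounded Ω)
    (x₀ : EuclideanSpace ℝ (Fin n)) (r : ℝ) (hr : 0 < r) (hball : Metric.ball x₀ r ⊆ Ω)
    (k : ℝ) (hk : 0 < k)
    (A : ℝ → ℝ) (hA : LocallyLipschitz A) (hAneg : ∀ s ≤ (0 : ℝ), A s = 0)
    (linf ζ : ℝ) (hlinf : 0 < linf) (hζ : 0 < ζ)
    (hAlow : ∀ s > ζ, -linf ≤ A s)
    (ωn : ℝ) (hωn : ωn = (MeasureTheory.volume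
      (Metric.ball (0 : EuclideanSpace ℝ (Fin n)) 1)).toReal)
    (mΩ : ℝ) (hmΩ : mΩ = (MeasureTheory.volume Ω).toReal)
    (C : ℝ) (hC : C = 4 * r ^ ((n : ℝ) - 2) * (1 - ((2 : ℝ) ^ n)⁻¹) * ωn)
    (Linf : ℝ) (hLinf : (1 / 2) * C + (k / 2 + linf) * mΩ < Linf * (r / 2) ^ n * ωn)
    (st : ℕ → ℝ) (hstpos : ∀ i, 0 < st i) (hsttop : Filter.Tendsto st Filter.atTop Filter.atTop)
    (hAst : ∀ i, Linf * st i ^ 2 < A (st i))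
    (w : ℝ → EuclideanSpace ℝ (Fin n) → ℝ)
    (hw : ∀ s x, w s x = if dist x x₀ ≤ r / 2 then s
      else if dist x x₀ < r then (2 * s / r) * (r - dist x x₀) else 0)
    (T : (EuclideanSpace ℝ (Fin n) → ℝ) → ℝ)
    (hT : ∀ u, T u = (1 / 2) * (∫ x in Ω, ‖fderiv ℝ u x‖ ^ 2) +
      (k / 2) * (∫ x in Ω, (u x) ^ 2) - ∫ x in Ω, A (u x)) :
    Filter.Tendsto (fun i => T (w (st i))) Filter.atTop Filter.atBot :=
  stmt14_general n Ω hΩo hΩb x₀ r hr hball k hk A hA linf ζ hlinf hAlow ωn hωn mΩ hmΩ C hC Linf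
    hLinf st hstpos hsttop hAst w hw T hT
end

section
/- Define f₀ : [0,∞) → ℝ by f₀(t) = √t (1/2 + sin(1/t)) for t > 0 and f₀(0) = 0, and F₀(s) = ∫₀ˢ f₀(t) dt. Then F₀ satisfies: F₀(0) = 0; liminf_{s→0⁺} F₀(s)/s² > −∞; limsup_{s→0⁺} F₀(s)/s² = +∞; and liminf_{s→0⁺} f₀(s)/s < 0. -/
/-!
Integrating by parts against
`d/dt [t^{5/2} cos(1/t)] = (5/2) t^{3/2} cos(1/t) + √t sin(1/t)`
shows that the oscillating part `∫₀ˢ √t sin(1/t) dt` is `O(s^{5/2})`.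
Hence `F₀(s) = s^{3/2}/3 + O(s^{5/2})`, so in fact `F₀(s)/s² → +∞` as `s → 0⁺`.
Along the points `s → 0⁺` with `sin(1/s) = -1` one has `f₀(s)/s = -1/(2√s) ≤ -1/2`.
-/

open Filter Topology intervalIntegral

open Real

lemma continuous_mul_comp_inv_of_bounded {φ ψ : ℝ → ℝ} {C : ℝ} (hφ : Continuous φ)
    (hφ0 : φ 0 = 0) (hψ : Continuous ψ) (hψC : ∀ x, |ψ x| ≤ C) :
    Continuous fun t => φ t * ψ t⁻¹ := by
  refine continuous_iff_continuousAt.2 fun t => ?_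
  rcases eq_or_ne t 0 with rfl | ht
  · have hφt : Tendsto φ (𝓝 0) (𝓝 0) := by simpa [hφ0] using hφ.tendsto 0
    simpa [ContinuousAt, hφ0] using
      hφt.zero_mul_isBoundedUnder_le (isBoundedUnder_of ⟨C, fun x => hψC x⁻¹⟩)
  · exact hφ.continuousAt.mul (hψ.continuousAt.comp (continuousAt_inv₀ ht))

lemma continuous_sqrt_mul_sin_inv : Continuous fun t => √t * sin t⁻¹ :=
  continuous_mul_comp_inv_of_bounded continuous_sqrt (by simp) continuous_sin abs_sin_le_one

lemma continuous_mul_sqrt_mul_cos_inv : Continuous fun t => t * √t * cos t⁻¹ :=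
  continuous_mul_comp_inv_of_bounded (by fun_prop) (by simp) continuous_cos abs_cos_le_one

lemma continuous_sq_mul_sqrt_mul_cos_inv : Continuous fun t => t ^ 2 * √t * cos t⁻¹ :=
  continuous_mul_comp_inv_of_bounded (by fun_prop) (by simp) continuous_cos abs_cos_le_one

lemma hasDerivAt_sq_mul_sqrt_mul_cos_inv {t : ℝ} (ht : 0 < t) :
    HasDerivAt (fun t => t ^ 2 * √t * cos t⁻¹)
      (5 / 2 * (t * √t * cos t⁻¹) + √t * sin t⁻¹) t := by
  have hsq := (hasDerivAt_pow 2 t).fun_mul (hasDerivAt_sqrt ht.ne')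
  have hcos := (hasDerivAt_cos t⁻¹).comp t (hasDerivAt_inv ht.ne')
  refine (hsq.fun_mul hcos).congr_deriv ?_
  have hs : √t ≠ 0 := by positivity
  simp only [Function.comp_apply, Nat.cast_ofNat]
  field_simp
  rw [sq_sqrt ht.le, one_div]
  ring

lemma integral_sqrt {s : ℝ} (hs : 0 ≤ s) : ∫ t in (0 : ℝ)..s, √t = 2 / 3 * (s * √s) := by
  simp only [sqrt_eq_rpow]
  rw [integral_rpow (Or.inl (by norm_num)), zero_rpow (by norm_num),
    rpow_add' hs (by norm_num), rpow_one]
  ring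

lemma integral_sqrt_mul_sin_inv {s : ℝ} (hs : 0 ≤ s) :
    ∫ t in (0 : ℝ)..s, √t * sin t⁻¹ =
      s ^ 2 * √s * cos s⁻¹ - 5 / 2 * ∫ t in (0 : ℝ)..s, t * √t * cos t⁻¹ := by
  have hcos := continuous_mul_sqrt_mul_cos_inv.intervalIntegrable (μ := MeasureTheory.volume) 0 s
  have hsin := continuous_sqrt_mul_sin_inv.intervalIntegrable (μ := MeasureTheory.volume) 0 s
  have hFTC := integral_eq_sub_of_hasDerivAt_of_le hs
    continuous_sq_mul_sqrt_mul_cos_inv.continuousOn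
    (fun t ht => hasDerivAt_sq_mul_sqrt_mul_cos_inv ht.1) (hcos.const_mul _ |>.add hsin)
  rw [integral_add (hcos.const_mul _) hsin, integral_const_mul] at hFTC
  simp only [zero_pow two_ne_zero, zero_mul, sub_zero] at hFTC
  linarith

lemma abs_integral_sqrt_mul_sin_inv_le {s : ℝ} (hs : 0 ≤ s) :
    |∫ t in (0 : ℝ)..s, √t * sin t⁻¹| ≤ 7 / 2 * (s ^ 2 * √s) := by
  have hboundary : |s ^ 2 * √s * cos s⁻¹| ≤ s ^ 2 * √s := by
    rw [abs_mul, abs_of_nonneg (by positivity : 0 ≤ s ^ 2 * √s)]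
    exact mul_le_of_le_one_right (by positivity) (abs_cos_le_one _)
  have hbulk : ‖∫ t in (0 : ℝ)..s, t * √t * cos t⁻¹‖ ≤ s * √s * |s - 0| := by
    refine norm_integral_le_of_norm_le_const fun t ht => ?_
    rw [Set.uIoc_of_le hs] at ht
    have ht0 : 0 ≤ t * √t := mul_nonneg ht.1.le (sqrt_nonneg t)
    rw [Real.norm_eq_abs, abs_mul, abs_of_nonneg ht0]
    calc t * √t * |cos t⁻¹| ≤ t * √t := mul_le_of_le_one_right ht0 (abs_cos_le_one _)
      _ ≤ s * √s := by gcongr <;> exact ht.2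
  rw [Real.norm_eq_abs, sub_zero, abs_of_nonneg hs] at hbulk
  rw [integral_sqrt_mul_sin_inv hs]
  calc _ ≤ |s ^ 2 * √s * cos s⁻¹| + |5 / 2 * ∫ t in (0 : ℝ)..s, t * √t * cos t⁻¹| :=
        abs_sub _ _
    _ = |s ^ 2 * √s * cos s⁻¹| + 5 / 2 * |∫ t in (0 : ℝ)..s, t * √t * cos t⁻¹| := by
        rw [abs_mul (5 / 2 : ℝ), abs_of_pos (by norm_num : (0 : ℝ) < 5 / 2)]
    _ ≤ s ^ 2 * √s + 5 / 2 * (s * √s * s) := by gcongr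
    _ = 7 / 2 * (s ^ 2 * √s) := by ring

lemma le_integral_sqrt_mul_half_add_sin_inv_div_sq {s : ℝ} (hs : 0 < s) :
    1 / 3 * (√s)⁻¹ - 7 / 2 * √s ≤ (∫ t in (0 : ℝ)..s, √t * (1 / 2 + sin t⁻¹)) / s ^ 2 := by
  have hsqrt :=
    (continuous_sqrt.intervalIntegrable (μ := MeasureTheory.volume) 0 s).const_mul (1 / 2)
  have hsin := continuous_sqrt_mul_sin_inv.intervalIntegrable (μ := MeasureTheory.volume) 0 s
  have hsplit : ∫ t in (0 : ℝ)..s, √t * (1 / 2 + sin t⁻¹) =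
      1 / 3 * (s * √s) + ∫ t in (0 : ℝ)..s, √t * sin t⁻¹ := by
    simp only [mul_add, mul_comm (√_) (1 / 2)]
    rw [integral_add hsqrt hsin, integral_const_mul, integral_sqrt hs.le]
    ring
  have hosc := (abs_le.1 (abs_integral_sqrt_mul_sin_inv_le hs.le)).1
  have hr : 0 < √s := sqrt_pos.2 hs
  rw [le_div_iff₀ (by positivity), hsplit]
  calc (1 / 3 * (√s)⁻¹ - 7 / 2 * √s) * s ^ 2
        = 1 / 3 * (s * √s) - 7 / 2 * (s ^ 2 * √s) := by
          field_simp
          rw [sq_sqrt hs.le]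
          ring
    _ ≤ _ := by linarith

lemma tendsto_integral_sqrt_mul_half_add_sin_inv_div_sq :
    Tendsto (fun s => (∫ t in (0 : ℝ)..s, √t * (1 / 2 + sin t⁻¹)) / s ^ 2) (𝓝[>] 0) atTop := by
  have hsqrt : Tendsto (fun s => √s) (𝓝[>] 0) (𝓝[>] 0) :=
    tendsto_nhdsWithin_of_tendsto_nhds_of_eventually_within _
      (by simpa using continuous_sqrt.tendsto' 0 0 (by simp) |>.mono_left nhdsWithin_le_nhds)
      (eventually_nhdsWithin_of_forall fun s hs => sqrt_pos.2 hs)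
  have hlower : Tendsto (fun s => 1 / 3 * (√s)⁻¹ - 7 / 2 * √s) (𝓝[>] 0) atTop := by
    have hinv := (tendsto_inv_nhdsGT_zero.comp hsqrt).const_mul_atTop
      (by norm_num : (0 : ℝ) < 1 / 3)
    have hsmall : Tendsto (fun s => 7 / 2 * √s) (𝓝[>] 0) (𝓝 0) := by
      simpa using (hsqrt.mono_right nhdsWithin_le_nhds).const_mul (7 / 2 : ℝ)
    simpa [sub_eq_add_neg] using hinv.atTop_add hsmall.neg
  exact tendsto_atTop_mono' _ (eventually_nhdsWithin_of_forall fun _ hs =>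
    le_integral_sqrt_mul_half_add_sin_inv_div_sq hs) hlower

lemma frequently_sin_inv_eq_neg_one : ∃ᶠ t in 𝓝[>] (0 : ℝ), sin t⁻¹ = -1 := by
  have hseq : Tendsto (fun k : ℕ => -(π / 2) + k * (2 * π)) atTop atTop :=
    tendsto_atTop_add_const_left _ _
      (tendsto_natCast_atTop_atTop.atTop_mul_const (by positivity))
  have hfreq : ∃ᶠ x in atTop, sin x = -1 :=
    hseq.frequently (Frequently.of_forall fun k => by simp [sin_add_nat_mul_two_pi])
  exact tendsto_inv_atTop_nhdsGT_zero.frequently (by simpa only [inv_inv] using hfreq)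

theorem stmt17 (f₀ F₀ : ℝ → ℝ)
    (hf₀ : ∀ t : ℝ, f₀ t = if t = 0 then 0 else Real.sqrt t * (1 / 2 + Real.sin t⁻¹))
    (hF₀ : ∀ s : ℝ, F₀ s = ∫ t in (0 : ℝ)..s, f₀ t) :
    F₀ 0 = 0 ∧
    Filter.liminf (fun s => ((F₀ s / s ^ 2 : ℝ) : EReal)) (𝓝[>] (0 : ℝ)) ≠ ⊥ ∧
    Filter.limsup (fun s => ((F₀ s / s ^ 2 : ℝ) : EReal)) (𝓝[>] (0 : ℝ)) = ⊤ ∧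
    Filter.liminf (fun s => ((f₀ s / s : ℝ) : EReal)) (𝓝[>] (0 : ℝ)) < 0 := by
  have hf : f₀ = fun t => √t * (1 / 2 + sin t⁻¹) := by
    ext t
    rw [hf₀]
    split_ifs with ht <;> simp [ht]
  have hF : Tendsto (fun s => ((F₀ s / s ^ 2 : ℝ) : EReal)) (𝓝[>] 0) (𝓝 ⊤) := by
    simpa only [EReal.tendsto_coe_nhds_top_iff, hF₀, hf] using
      tendsto_integral_sqrt_mul_half_add_sin_inv_div_sq
  have hf_le : ∃ᶠ s in 𝓝[>] (0 : ℝ), ((f₀ s / s : ℝ) : EReal) ≤ ((-1 / 2 : ℝ) : EReal) := by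
    refine (frequently_sin_inv_eq_neg_one.and_eventually (Ioo_mem_nhdsGT one_pos)).mono ?_
    rintro s ⟨hsin, hs0, hs1⟩
    have hs_le_sqrt : s ≤ √s := (le_sqrt' hs0).2 (by nlinarith)
    rw [EReal.coe_le_coe_iff, hf, div_le_iff₀ hs0]
    simp only [hsin]
    linarith
  refine ⟨by simp [hF₀], by simp [hF.liminf_eq], hF.limsup_eq, ?_⟩
  calc _ ≤ ((-1 / 2 : ℝ) : EReal) := liminf_le_of_frequently_le' hf_le
    _ < 0 := by exact_mod_cast (by norm_num : (-1 / 2 : ℝ) < 0)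
end
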